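/- Let S ⊆ {0,1}^X be shattering-extremal, x ∈ X, and S₀, S₁ the restrictions of S associated with x. Then S₀ and S₁ are shattering-extremal and str(S₀) ⊕_x str(S₁) = str(S). Conversely, if S₀ and S₁ are SE and str(S₀) ⊕_x str(S₁) = str(S), then S is SE. -/

import Mathlib

open Finset

variable {α : Type*} [Fintype α] [DecidableEq α]

/-- `S` shatters `Y`: every assignment on `Y` extends to a member of `S`. -/
def shatters (S : Finset (α → Bool)) (Y : Finset α) : Prop :=
  ∀ f : α → Bool, ∃ s ∈ S, ∀ a ∈ Y, s a = f a

/-- `S` strongly shatters `Y`: some assignment off `Y` has all its `Y`-extensions in `S`. -/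
def stronglyShatters (S : Finset (α → Bool)) (Y : Finset α) : Prop :=
  ∃ g : α → Bool, ∀ f : α → Bool, (fun a => if a ∈ Y then f a else g a) ∈ S

open Classical in
/-- The family of shattered subsets. -/
noncomputable def strF (S : Finset (α → Bool)) : Finset (Finset α) :=
  Finset.univ.filter (fun Y => shatters S Y)

open Classical in
/-- The family of strongly shattered subsets. -/
noncomputable def sstrF (S : Finset (α → Bool)) : Finset (Finset α) :=
  Finset.univ.filter (fun Y => stronglyShatters S Y)

/-- Shattering-extremal: shattered = strongly shattered. -/
def SE (S : Finset (α → Bool)) : Prop :=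
  ∀ Y : Finset α, shatters S Y ↔ stronglyShatters S Y

def oplus (A B : Finset (Finset α)) (x : α) : Finset (Finset α) :=
  A ∪ B ∪ (A ∩ B).image (insert x)

/-! The theorem is a statement about cardinalities: `S` is shattering-extremal iff
`|S| = |str S|`. Indeed Pajor's inequality `|S| ≤ |str S|` and the reverse Sauer inequality
`|sstr S| ≤ |S|` hold for every `S`, both by induction on `S` split along a coordinate `x`:
`str S₀ ⊕ₓ str S₁ ⊆ str S` and `sstr S ⊆ sstr S₀ ⊕ₓ sstr S₁`, and `|A ⊕ₓ B| = |A| + |B|` when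
no member of `A ∪ B` contains `x`. Conversely `|S| = |str S|` forces `str S ⊆ sstr S`, again by
induction, splitting along a coordinate outside the shattered set.

Given this characterisation the theorem is the equality case of the chain
`|S| = |S₀| + |S₁| ≤ |str S₀| + |str S₁| = |str S₀ ⊕ₓ str S₁| ≤ |str S|`. -/

open Finset

variable {ι : Type*}

lemma mem_strF [Fintype ι] {S : Finset (ι → Bool)} {Y : Finset ι} :
    Y ∈ strF S ↔ shatters S Y := by
  simp [strF]

lemma mem_sstrF [Fintype ι] [DecidableEq ι] {S : Finset (ι → Bool)} {Y : Finset ι} :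
    Y ∈ sstrF S ↔ stronglyShatters S Y := by
  simp [sstrF]

lemma shatters.mono {S T : Finset (ι → Bool)} {Y : Finset ι} (hST : S ⊆ T)
    (h : shatters S Y) : shatters T Y := fun f =>
  let ⟨s, hs, hsf⟩ := h f
  ⟨s, hST hs, hsf⟩

lemma stronglyShatters.mono [DecidableEq ι] {S T : Finset (ι → Bool)} {Y : Finset ι}
    (hST : S ⊆ T) (h : stronglyShatters S Y) : stronglyShatters T Y :=
  let ⟨g, hg⟩ := h
  ⟨g, fun f => hST (hg f)⟩

lemma stronglyShatters.shatters [DecidableEq ι] {S : Finset (ι → Bool)} {Y : Finset ι}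
    (h : stronglyShatters S Y) : shatters S Y := fun f =>
  let ⟨g, hg⟩ := h
  ⟨_, hg f, fun a ha => by simp [ha]⟩

lemma notMem_of_shatters_filter {S : Finset (ι → Bool)} {x : ι} {b : Bool} {Y : Finset ι}
    (h : shatters (S.filter fun f => f x = b) Y) : x ∉ Y := fun hx => by
  obtain ⟨s, hs, hsY⟩ := h fun _ => !b
  simpa [(mem_filter.1 hs).2] using hsY x hx

lemma shatters_insert_of_forall_filter [DecidableEq ι] {S : Finset (ι → Bool)} {x : ι}
    {Z : Finset ι} (h : ∀ b : Bool, shatters (S.filter fun f => f x = b) Z) :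
    shatters S (insert x Z) := by
  intro f
  obtain ⟨s, hs, hsZ⟩ := h (f x) f
  rw [mem_filter] at hs
  exact ⟨s, hs.1, by simpa [hs.2] using hsZ⟩

lemma stronglyShatters.exists_filter [DecidableEq ι] {S : Finset (ι → Bool)} {x : ι}
    {Y : Finset ι} (h : stronglyShatters S Y) (hx : x ∉ Y) :
    ∃ b : Bool, stronglyShatters (S.filter fun f => f x = b) Y :=
  let ⟨g, hg⟩ := h
  ⟨g x, g, fun f => mem_filter.2 ⟨hg f, by simp [hx]⟩⟩

lemma stronglyShatters.filter_erase [DecidableEq ι] {S : Finset (ι → Bool)} {x : ι}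
    {Y : Finset ι} (h : stronglyShatters S Y) (hx : x ∈ Y) (b : Bool) :
    stronglyShatters (S.filter fun f => f x = b) (Y.erase x) := by
  obtain ⟨g, hg⟩ := h
  refine ⟨Function.update g x b, fun f => mem_filter.2 ⟨?_, by simp⟩⟩
  convert hg (Function.update f x b) using 1
  funext a
  by_cases hax : a = x
  · subst hax
    simp [hx]
  · by_cases haY : a ∈ Y <;> simp [hax, haY]

lemma card_filter_false_add_card_filter_true (S : Finset (ι → Bool)) (x : ι) :
    (S.filter fun f => f x = false).card + (S.filter fun f => f x = true).card = S.card := by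
  simpa using card_filter_add_card_filter_not (s := S) (fun f => f x = false)

lemma card_oplus [DecidableEq ι] {A B : Finset (Finset ι)} {x : ι}
    (h : ∀ Y ∈ A ∪ B, x ∉ Y) :
    (oplus A B x).card = A.card + B.card := by
  have hinj : Set.InjOn (insert x) ((A ∩ B : Finset (Finset ι)) : Set (Finset ι)) := by
    intro Y hY Z hZ hYZ
    have hxY : x ∉ Y := h _ (mem_union_left _ (mem_inter.1 hY).1)
    have hxZ : x ∉ Z := h _ (mem_union_left _ (mem_inter.1 hZ).1)
    rw [← erase_insert hxY, ← erase_insert hxZ, hYZ]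
  have hdisj : Disjoint (A ∪ B) ((A ∩ B).image (insert x)) := by
    rw [disjoint_left]
    rintro Y hY hY'
    obtain ⟨Z, -, rfl⟩ := mem_image.1 hY'
    exact h _ hY (mem_insert_self x Z)
  rw [oplus, card_union_of_disjoint hdisj, card_image_of_injOn hinj, card_union_add_card_inter]

lemma card_oplus_strF [Fintype ι] [DecidableEq ι] (S : Finset (ι → Bool)) (x : ι) :
    (oplus (strF (S.filter fun f => f x = false)) (strF (S.filter fun f => f x = true)) x).card
      = (strF (S.filter fun f => f x = false)).card + (strF (S.filter fun f => f x = true)).card :=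
  card_oplus fun Y hY => by
    rcases mem_union.1 hY with h | h <;> exact notMem_of_shatters_filter (mem_strF.1 h)

lemma card_oplus_sstrF [Fintype ι] [DecidableEq ι] (S : Finset (ι → Bool)) (x : ι) :
    (oplus (sstrF (S.filter fun f => f x = false)) (sstrF (S.filter fun f => f x = true)) x).card
      = (sstrF (S.filter fun f => f x = false)).card
        + (sstrF (S.filter fun f => f x = true)).card :=
  card_oplus fun Y hY => by
    rcases mem_union.1 hY with h | h <;>
      exact notMem_of_shatters_filter (mem_sstrF.1 h).shatters

lemma oplus_strF_subset [Fintype ι] [DecidableEq ι] (S : Finset (ι → Bool)) (x : ι) :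
    oplus (strF (S.filter fun f => f x = false)) (strF (S.filter fun f => f x = true)) x
      ⊆ strF S := by
  intro Y hY
  simp only [oplus, mem_union, mem_image, mem_inter, mem_strF] at hY ⊢
  rcases hY with (h | h) | ⟨Z, ⟨h0, h1⟩, rfl⟩
  · exact h.mono (filter_subset _ _)
  · exact h.mono (filter_subset _ _)
  · exact shatters_insert_of_forall_filter (Bool.forall_bool.2 ⟨h0, h1⟩)

lemma sstrF_subset_oplus [Fintype ι] [DecidableEq ι] (S : Finset (ι → Bool)) (x : ι) :
    sstrF S ⊆
      oplus (sstrF (S.filter fun f => f x = false)) (sstrF (S.filter fun f => f x = true)) x := by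
  intro Y hY
  rw [mem_sstrF] at hY
  simp only [oplus, mem_union, mem_image, mem_inter, mem_sstrF]
  by_cases hx : x ∈ Y
  · exact Or.inr ⟨Y.erase x, ⟨hY.filter_erase hx false, hY.filter_erase hx true⟩,
      insert_erase hx⟩
  · obtain ⟨b | b, hb⟩ := hY.exists_filter hx
    exacts [Or.inl (Or.inl hb), Or.inl (Or.inr hb)]

lemma filter_apply_eq_ssubset {S : Finset (ι → Bool)} {x : ι} {f g : ι → Bool}
    (hf : f ∈ S) (hg : g ∈ S) (hfg : f x ≠ g x) (b : Bool) :
    S.filter (fun h => h x = b) ⊂ S :=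
  filter_ssubset.2 <|
    if hb : f x = b then ⟨g, hg, fun hgb => hfg (hb.trans hgb.symm)⟩ else ⟨f, hf, hb⟩

theorem induction_on_coordinate_split {p : Finset (ι → Bool) → Prop}
    (small : ∀ S : Finset (ι → Bool), S.card ≤ 1 → p S)
    (split : ∀ (S : Finset (ι → Bool)) (x : ι),
      p (S.filter fun f => f x = false) → p (S.filter fun f => f x = true) → p S)
    (S : Finset (ι → Bool)) : p S := by
  induction S using Finset.strongInduction with
  | H S ih =>
    by_cases hS : S.card ≤ 1
    · exact small S hS
    obtain ⟨f, hf, g, hg, hfg⟩ := one_lt_card.1 (not_le.1 hS)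
    obtain ⟨x, hx⟩ := Function.ne_iff.1 hfg
    exact split S x (ih _ (filter_apply_eq_ssubset hf hg hx false))
      (ih _ (filter_apply_eq_ssubset hf hg hx true))

theorem card_le_card_strF [Fintype ι] (S : Finset (ι → Bool)) : S.card ≤ (strF S).card := by
  classical
  induction S using induction_on_coordinate_split with
  | small S hS =>
    obtain rfl | ⟨g, hg⟩ := S.eq_empty_or_nonempty
    · simp
    · exact hS.trans (card_pos.2 ⟨∅, mem_strF.2 fun _ => ⟨g, hg, by simp⟩⟩)
  | split S x h0 h1 =>
    have hle := card_le_card (oplus_strF_subset S x)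
    rw [card_oplus_strF] at hle
    have := card_filter_false_add_card_filter_true S x
    omega

lemma eq_empty_of_stronglyShatters [DecidableEq ι] {S : Finset (ι → Bool)} {Y : Finset ι}
    (hS : S.card ≤ 1) (h : stronglyShatters S Y) : Y = ∅ := by
  obtain ⟨g, hg⟩ := h
  refine eq_empty_of_forall_notMem fun a ha => ?_
  have := congrFun (card_le_one.1 hS _ (hg fun _ => false) _ (hg fun _ => true)) a
  simp [ha] at this

theorem card_sstrF_le_card [Fintype ι] [DecidableEq ι] (S : Finset (ι → Bool)) :
    (sstrF S).card ≤ S.card := by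
  induction S using induction_on_coordinate_split with
  | small S hS =>
    obtain h | ⟨Y₀, hY₀⟩ := (sstrF S).eq_empty_or_nonempty
    · simp [h]
    · obtain ⟨g, hg⟩ := mem_sstrF.1 hY₀
      calc (sstrF S).card ≤ 1 := card_le_one.2 fun Y hY Z hZ =>
            (eq_empty_of_stronglyShatters hS (mem_sstrF.1 hY)).trans
              (eq_empty_of_stronglyShatters hS (mem_sstrF.1 hZ)).symm
        _ ≤ S.card := card_pos.2 ⟨_, hg fun _ => false⟩
  | split S x h0 h1 =>
    have hle := card_le_card (sstrF_subset_oplus S x)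
    rw [card_oplus_sstrF] at hle
    have := card_filter_false_add_card_filter_true S x
    omega

theorem card_eq_card_strF_iff [Fintype ι] [DecidableEq ι] (S : Finset (ι → Bool)) (x : ι) :
    S.card = (strF S).card ↔
      ((S.filter fun f => f x = false).card = (strF (S.filter fun f => f x = false)).card ∧
        (S.filter fun f => f x = true).card = (strF (S.filter fun f => f x = true)).card ∧
        oplus (strF (S.filter fun f => f x = false)) (strF (S.filter fun f => f x = true)) x
          = strF S) := by
  have hS := card_filter_false_add_card_filter_true S x
  have h0 := card_le_card_strF (S.filter fun f => f x = false)
  have h1 := card_le_card_strF (S.filter fun f => f x = true)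
  have hsub := oplus_strF_subset S x
  have hle := card_le_card hsub
  have hop := card_oplus_strF S x
  constructor
  · intro h
    exact ⟨by omega, by omega, eq_of_subset_of_card_le hsub (by omega)⟩
  · rintro ⟨e0, e1, heq⟩
    rw [← heq]
    omega

lemma shatters.stronglyShatters_of_eqOn_compl [DecidableEq ι] {S : Finset (ι → Bool)}
    {Y : Finset ι} (h : shatters S Y) (hS : ∀ f ∈ S, ∀ g ∈ S, ∀ a ∉ Y, f a = g a) :
    stronglyShatters S Y := by
  obtain ⟨s, hs, -⟩ := h fun _ => false
  refine ⟨s, fun f => ?_⟩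
  obtain ⟨t, ht, htY⟩ := h f
  convert ht using 1
  funext a
  by_cases haY : a ∈ Y
  · simp [haY, htY a haY]
  · simp [haY, hS s hs t ht a haY]

theorem stronglyShatters_of_card_eq_card_strF [Fintype ι] [DecidableEq ι] {S : Finset (ι → Bool)}
    {Y : Finset ι} (hS : S.card = (strF S).card) (hY : shatters S Y) : stronglyShatters S Y := by
  induction S using Finset.strongInduction with
  | H S ih =>
    by_cases hsplit : ∃ f ∈ S, ∃ g ∈ S, ∃ x ∉ Y, f x ≠ g x
    · obtain ⟨f, hf, g, hg, x, hxY, hfg⟩ := hsplit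
      obtain ⟨h0, h1, hstr⟩ := (card_eq_card_strF_iff S x).1 hS
      have hY' := hstr ▸ mem_strF.2 hY
      simp only [oplus, mem_union, mem_image, mem_strF] at hY'
      rcases hY' with (hY0 | hY1) | ⟨Z, -, rfl⟩
      · exact (ih _ (filter_apply_eq_ssubset hf hg hfg false) h0 hY0).mono (filter_subset _ _)
      · exact (ih _ (filter_apply_eq_ssubset hf hg hfg true) h1 hY1).mono (filter_subset _ _)
      · exact absurd (mem_insert_self x Z) hxY
    · push Not at hsplit
      exact hY.stronglyShatters_of_eqOn_compl hsplit

theorem SE_iff_card_eq_card_strF [Fintype ι] [DecidableEq ι] (S : Finset (ι → Bool)) :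
    SE S ↔ S.card = (strF S).card := by
  refine ⟨fun h => (card_le_card_strF S).antisymm ?_,
    fun h Y => ⟨stronglyShatters_of_card_eq_card_strF h, stronglyShatters.shatters⟩⟩
  have hstr : strF S = sstrF S := by
    ext Y
    rw [mem_strF, mem_sstrF, h Y]
  exact hstr ▸ card_sstrF_le_card S

theorem stmt10 (S : Finset (α → Bool)) (x : α) :
    SE S ↔
      (SE (S.filter fun f => f x = false) ∧ SE (S.filter fun f => f x = true) ∧
        oplus (strF (S.filter fun f => f x = false)) (strF (S.filter fun f => f x = true)) x
          = strF S) := by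
  simp only [SE_iff_card_eq_card_strF]
  exact card_eq_card_strF_iff S x
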